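/- For every N ≥ 2, the elementary N-qubit hypergraph state (the state whose coefficient on |11…1⟩ is −1 and whose coefficient on every other computational basis vector is 1) is SLOCC-equivalent to the N-qubit GHZ state |0⟩^{⊗N} + |1⟩^{⊗N}. -/

import Mathlib

/-- The `N`-qubit GHZ state `|0…0⟩ + |1…1⟩`. -/
noncomputable def GHZ (N : ℕ) : (Fin N → Fin 2) → ℂ :=
  fun f => if (∀ k, f k = 0) ∨ (∀ k, f k = 1) then 1 else 0

/-- The elementary `N`-qubit hypergraph state: coefficient `-1` on `|1…1⟩`
and `1` on every other computational basis vector. -/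
noncomputable def elementaryHypergraph (N : ℕ) : (Fin N → Fin 2) → ℂ :=
  fun f => if ∀ k, f k = 1 then -1 else 1

/-! With `|+⟩ = |0⟩ + |1⟩`, the hypergraph state is the combination `|+…+⟩ - 2 |1…1⟩` of two
product states, and GHZ is `|0…0⟩ + |1…1⟩`. A local operator acts factorwise on product states,
so it suffices to take on qubit `k` the map `|+⟩ ↦ |0⟩`, `|1⟩ ↦ c k • |1⟩` with `∏ k, c k = -1/2`. -/

open Matrix

section ProductStates

variable {ι α β R : Type*} [Fintype ι] [CommSemiring R]

def productState (v : ι → α → R) : (ι → α) → R :=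
  fun g => ∏ k, v k (g k)

def Matrix.piKronecker (A : ι → Matrix α β R) : Matrix (ι → α) (ι → β) R :=
  Matrix.of fun f g => ∏ k, A k (f k) (g k)

theorem Matrix.piKronecker_mulVec_productState [DecidableEq ι] [Fintype β]
    (A : ι → Matrix α β R) (v : ι → β → R) :
    piKronecker A *ᵥ productState v = productState fun k => A k *ᵥ v k := by
  ext f
  simp only [productState, mulVec, dotProduct, piKronecker, of_apply, Fintype.prod_sum,
    Finset.prod_mul_distrib]

theorem productState_smul (c : ι → R) (v : ι → α → R) :
    productState (fun k => c k • v k) = (∏ k, c k) • productState v := by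
  ext g
  simp only [productState, Pi.smul_apply, smul_eq_mul, Finset.prod_mul_distrib]

theorem productState_single [DecidableEq α] (a : α) :
    productState (fun _ : ι => Pi.single a (1 : R)) = fun g => if ∀ k, g k = a then 1 else 0 := by
  ext g
  simp only [productState, Pi.single_apply, Fintype.prod_boole]

end ProductStates

section Qubits

variable {R : Type*} [CommRing R]

def plusToZeroMatrix (c : R) : Matrix (Fin 2) (Fin 2) R :=
  !![1, 0; -c, c]

theorem det_plusToZeroMatrix (c : R) : (plusToZeroMatrix c).det = c := by
  simp [plusToZeroMatrix, det_fin_two_of]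

theorem plusToZeroMatrix_mulVec_one (c : R) : plusToZeroMatrix c *ᵥ 1 = Pi.single 0 1 := by
  ext i; fin_cases i <;> simp [plusToZeroMatrix, mulVec, dotProduct]

theorem plusToZeroMatrix_mulVec_single_one (c : R) :
    plusToZeroMatrix c *ᵥ Pi.single 1 1 = c • Pi.single 1 1 := by
  ext i; fin_cases i <;> simp [plusToZeroMatrix]

end Qubits

theorem elementaryHypergraph_eq_sub (N : ℕ) :
    elementaryHypergraph N =
      productState (fun _ => 1) - (2 : ℂ) • productState (fun _ : Fin N => Pi.single 1 1) := by
  ext g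
  rw [productState_single]
  simp only [elementaryHypergraph, productState, Pi.one_apply, Finset.prod_const_one,
    Pi.sub_apply, Pi.smul_apply, smul_eq_mul]
  split_ifs <;> norm_num

theorem GHZ_eq_add {N : ℕ} (hN : N ≠ 0) :
    GHZ N = productState (fun _ => Pi.single 0 1) + productState (fun _ : Fin N => Pi.single 1 1) := by
  have : Nonempty (Fin N) := ⟨⟨0, Nat.pos_of_ne_zero hN⟩⟩
  ext g
  by_cases h0 : ∀ k, g k = 0 <;> simp [GHZ, productState_single, h0]

/-- For `N ≥ 2`, the elementary `N`-qubit hypergraph state is SLOCC-equivalent to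
the `N`-qubit GHZ state. -/
theorem elementaryHypergraph_slocc_equiv_ghz (N : ℕ) (hN : 2 ≤ N) :
    ∃ A : Fin N → Matrix (Fin 2) (Fin 2) ℂ,
      (∀ k, IsUnit (A k)) ∧
      ∀ f : Fin N → Fin 2,
        GHZ N f = ∑ g : Fin N → Fin 2, (∏ k, A k (f k) (g k)) * elementaryHypergraph N g := by
  let k₀ : Fin N := ⟨0, by omega⟩
  let c : Fin N → ℂ := Pi.mulSingle k₀ (-1 / 2)
  refine ⟨fun k => plusToZeroMatrix (c k), fun k => ?_, fun f => ?_⟩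
  · rw [isUnit_iff_isUnit_det, det_plusToZeroMatrix, isUnit_iff_ne_zero]
    by_cases hk : k = k₀ <;> simp [c, hk]
  · change GHZ N f = (piKronecker (fun k => plusToZeroMatrix (c k)) *ᵥ elementaryHypergraph N) f
    rw [elementaryHypergraph_eq_sub, mulVec_sub, mulVec_smul, piKronecker_mulVec_productState,
      piKronecker_mulVec_productState]
    simp only [plusToZeroMatrix_mulVec_one, plusToZeroMatrix_mulVec_single_one]
    rw [productState_smul, Fintype.prod_pi_mulSingle', smul_smul, GHZ_eq_add (by omega)]
    norm_num
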